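/- arXiv:0903.4390 — 3 statements merged into one kernel-verified Lean document; each statement's English description precedes it below -/
import Mathlib

section
/- Let A be a ±1-sequence of length n+1 with n = 2m even, and let B = αA (i.e. b_i = (-1)^{i-1}a_i for i ≤ n, b_{n+1} = -a_{n+1}). Define = a_{n-1}, a_2, a_{n-3}, a_4, ..., a_1, a_n, a_{n+1} (odd-indexed entries among the first n reversed, even-indexed entries kept, last entry kept) and B̂ = αÂ. Then N(Â) + N(B̂) = N(A) + N(B). -/
open Finset LaurentPolynomial

/-- Non-periodic autocorrelation of a length-`n` integer sequence `a` (indexed `1..n`). -/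
noncomputable def autocorr (n : ℕ) (a : ℤ → ℤ) (i : ℤ) : ℤ :=
  ∑ j ∈ Finset.Icc (1:ℤ) (n:ℤ), a j * a (i + j)

/-- The Laurent polynomial `A(x) = a₁ + a₂ x + ⋯ + aₙ x^{n-1}`. -/
noncomputable def seqPoly (n : ℕ) (a : ℤ → ℤ) : LaurentPolynomial ℤ :=
  ∑ i ∈ Finset.Icc (1:ℤ) (n:ℤ), LaurentPolynomial.C (a i) * LaurentPolynomial.T (i - 1)

/-- The Laurent polynomial `A(x⁻¹)`. -/
noncomputable def seqPolyInv (n : ℕ) (a : ℤ → ℤ) : LaurentPolynomial ℤ :=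
  ∑ i ∈ Finset.Icc (1:ℤ) (n:ℤ), LaurentPolynomial.C (a i) * LaurentPolynomial.T (1 - i)

/-- The norm `N(A) = A(x) A(x⁻¹)`. -/
noncomputable def normL (n : ℕ) (a : ℤ → ℤ) : LaurentPolynomial ℤ :=
  seqPoly n a * seqPolyInv n a

/-- `a` is a ±1 (binary) sequence on positions `1..m`. -/
def binaryOn (m : ℕ) (a : ℤ → ℤ) : Prop :=
  ∀ k ∈ Finset.Icc (1:ℤ) (m:ℤ), a k = 1 ∨ a k = -1

/-- Base sequences `BS(m,n)`. -/
def isBS (m n : ℕ) (a b c d : ℤ → ℤ) : Prop :=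
  binaryOn m a ∧ binaryOn m b ∧ binaryOn n c ∧ binaryOn n d ∧
  normL m a + normL m b + normL n c + normL n d
    = LaurentPolynomial.C (2 * ((m:ℤ) + (n:ℤ)))

/-- The map `α`: `(αA)_i = (-1)^{i-1} a_i` for `i ≤ n`, `(αA)_{n+1} = -a_{n+1}`. -/
def alphaMap (n : ℕ) (a : ℤ → ℤ) : ℤ → ℤ :=
  fun i => if i = (n:ℤ) + 1 then -a i else (Int.negOnePow (i - 1) : ℤ) * a i

/-- Near-normal sequences `NN(n)` (sign relations plus the base-sequence norm condition). -/
def isNN (n : ℕ) (a b c d : ℤ → ℤ) : Prop :=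
  binaryOn (n+1) a ∧ binaryOn (n+1) b ∧ binaryOn n c ∧ binaryOn n d ∧
  (∀ i : ℤ, 1 ≤ i → i ≤ (n:ℤ) → b i = (Int.negOnePow (i - 1) : ℤ) * a i) ∧
  b ((n:ℤ) + 1) = -a ((n:ℤ) + 1) ∧
  normL (n+1) a + normL (n+1) b + normL n c + normL n d
    = LaurentPolynomial.C (2 * (2 * (n:ℤ) + 1))

/-- The alternated sequence `A*`: `(A*)_i = (-1)^{i-1} a_i`. -/
def altSeq (a : ℤ → ℤ) : ℤ → ℤ := fun k => (Int.negOnePow (k - 1) : ℤ) * a k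

/-- The sequence `Â = a_{n-1}, a_2, a_{n-3}, a_4, …, a_1, a_n, a_{n+1}`. -/
def hatSeq (n : ℕ) (a : ℤ → ℤ) : ℤ → ℤ :=
  fun i => if i ≤ (n:ℤ) ∧ Odd i then a ((n:ℤ) - i) else a i

/-- odd indices in `[1,n]` -/
private noncomputable def oddS (n : ℕ) : Finset ℤ := (Finset.Icc (1:ℤ) (n:ℤ)).filter (fun i => Odd i)
private noncomputable def evenS (n : ℕ) : Finset ℤ := (Finset.Icc (1:ℤ) (n:ℤ)).filter (fun i => ¬ Odd i)

private lemma mem_oddS {n : ℕ} {i : ℤ} : i ∈ oddS n ↔ (1 ≤ i ∧ i ≤ (n:ℤ)) ∧ Odd i := by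
  simp [oddS, Finset.mem_filter, Finset.mem_Icc, and_assoc]

private lemma mem_evenS {n : ℕ} {i : ℤ} : i ∈ evenS n ↔ (1 ≤ i ∧ i ≤ (n:ℤ)) ∧ ¬ Odd i := by
  simp [evenS, Finset.mem_filter, Finset.mem_Icc, and_assoc]

private lemma sub_mem_oddS {n : ℕ} (hn : Even n) {i : ℤ} (hi : i ∈ oddS n) :
    (n:ℤ) - i ∈ oddS n := by
  rw [mem_oddS] at hi ⊢
  obtain ⟨⟨h1, h2⟩, ho⟩ := hi
  have hne : i ≠ (n:ℤ) := by
    rintro rfl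
    exact (Int.not_odd_iff_even.mpr (by exact_mod_cast hn)) ho
  refine ⟨⟨by omega, by omega⟩, Even.sub_odd (by exact_mod_cast hn) ho⟩

private lemma reindex_oddS {n : ℕ} (hn : Even n) (t : ℤ → LaurentPolynomial ℤ) :
    ∑ i ∈ oddS n, t ((n:ℤ) - i) = ∑ i ∈ oddS n, t i :=
  Finset.sum_nbij' (fun i => (n:ℤ) - i) (fun i => (n:ℤ) - i)
    (fun i hi => sub_mem_oddS hn hi) (fun i hi => sub_mem_oddS hn hi)
    (fun i _ => by ring) (fun i _ => by ring) (fun i _ => rfl)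

private lemma decomp (n : ℕ) (t : ℤ → LaurentPolynomial ℤ) :
    ∑ i ∈ Finset.Icc (1:ℤ) (((n+1:ℕ)):ℤ), t i
      = (∑ i ∈ oddS n, t i) + (∑ i ∈ evenS n, t i) + t ((n:ℤ)+1) := by
  have h1 : Finset.Icc (1:ℤ) (((n+1:ℕ)):ℤ) = insert ((n:ℤ)+1) (Finset.Icc (1:ℤ) (n:ℤ)) := by
    ext x; simp [Finset.mem_Icc, Finset.mem_insert]; omega
  have h2 : ((n:ℤ)+1) ∉ Finset.Icc (1:ℤ) (n:ℤ) := by simp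
  rw [h1, Finset.sum_insert h2, ← Finset.sum_filter_add_sum_filter_not _ (fun i => Odd i)]
  rw [oddS, evenS]; ring

/-- `N(Â) + N(B̂) = N(A) + N(B)` for `B = αA`, `B̂ = αÂ`. -/
theorem stmt_9 (n : ℕ) (hn : Even n) (a : ℤ → ℤ) (ha : binaryOn (n+1) a) :
    normL (n+1) (hatSeq n a) + normL (n+1) (alphaMap n (hatSeq n a))
      = normL (n+1) a + normL (n+1) (alphaMap n a) := by
  classical
  set O := ∑ i ∈ oddS n, LaurentPolynomial.C (a i) * T (i-1) with hO
  set E := ∑ i ∈ evenS n, LaurentPolynomial.C (a i) * T (i-1) with hE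
  set Oi := ∑ i ∈ oddS n, LaurentPolynomial.C (a i) * T (1-i) with hOi
  set Ei := ∑ i ∈ evenS n, LaurentPolynomial.C (a i) * T (1-i) with hEi
  set c := LaurentPolynomial.C (a ((n:ℤ)+1)) with hc
  -- basic value facts
  have hat_odd : ∀ i ∈ oddS n, hatSeq n a i = a ((n:ℤ) - i) := by
    intro i hi; rw [mem_oddS] at hi
    exact if_pos ⟨hi.1.2, hi.2⟩
  have hat_even : ∀ i ∈ evenS n, hatSeq n a i = a i := by
    intro i hi; rw [mem_evenS] at hi
    exact if_neg (fun h => hi.2 h.2)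
  have hat_top : hatSeq n a ((n:ℤ)+1) = a ((n:ℤ)+1) := by
    apply if_neg; rintro ⟨h, -⟩; omega
  have alpha_odd : ∀ (s : ℤ → ℤ), ∀ i ∈ oddS n, alphaMap n s i = s i := by
    intro s i hi; rw [mem_oddS] at hi
    have hne : i ≠ (n:ℤ)+1 := by omega
    rw [alphaMap, if_neg hne, Int.negOnePow_even _ ?_, Units.val_one, one_mul]
    obtain ⟨k, hk⟩ := hi.2; exact ⟨k, by omega⟩
  have alpha_even : ∀ (s : ℤ → ℤ), ∀ i ∈ evenS n, alphaMap n s i = - s i := by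
    intro s i hi; rw [mem_evenS] at hi
    have hne : i ≠ (n:ℤ)+1 := by omega
    have hev : Even i := Int.not_odd_iff_even.mp hi.2
    rw [alphaMap, if_neg hne, Int.negOnePow_odd _ ?_]
    · push_cast; ring
    · exact Even.sub_odd hev odd_one
  have alpha_top : ∀ (s : ℤ → ℤ), alphaMap n s ((n:ℤ)+1) = - s ((n:ℤ)+1) := by
    intro s; rw [alphaMap, if_pos rfl]
  -- exponent normalization for the top term
  have etop : ((n:ℤ)+1) - 1 = (n:ℤ) := by ring
  have etopi : 1 - ((n:ℤ)+1) = -(n:ℤ) := by ring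
  -- hat odd sums via reindexing
  have hhatO : (∑ i ∈ oddS n, LaurentPolynomial.C (a ((n:ℤ)-i)) * T (i-1))
      = T ((n:ℤ)-2) * Oi := by
    have := reindex_oddS hn (fun j => LaurentPolynomial.C (a j) * T ((n:ℤ)-1-j))
    calc (∑ i ∈ oddS n, LaurentPolynomial.C (a ((n:ℤ)-i)) * T (i-1))
        = ∑ i ∈ oddS n, LaurentPolynomial.C (a ((n:ℤ)-i)) * T ((n:ℤ)-1-((n:ℤ)-i)) := by
          apply Finset.sum_congr rfl; intro i _; rw [show (n:ℤ)-1-((n:ℤ)-i) = i-1 by ring]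
      _ = ∑ i ∈ oddS n, LaurentPolynomial.C (a i) * T ((n:ℤ)-1-i) := this
      _ = T ((n:ℤ)-2) * Oi := by
          rw [hOi, Finset.mul_sum]
          apply Finset.sum_congr rfl; intro i _
          rw [show (n:ℤ)-1-i = ((n:ℤ)-2) + (1-i) by ring, T_add]; ring
  have hhatOi : (∑ i ∈ oddS n, LaurentPolynomial.C (a ((n:ℤ)-i)) * T (1-i))
      = T (2-(n:ℤ)) * O := by
    have := reindex_oddS hn (fun j => LaurentPolynomial.C (a j) * T (1-((n:ℤ)-j)))
    calc (∑ i ∈ oddS n, LaurentPolynomial.C (a ((n:ℤ)-i)) * T (1-i))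
        = ∑ i ∈ oddS n, LaurentPolynomial.C (a ((n:ℤ)-i)) * T (1-((n:ℤ)-((n:ℤ)-i))) := by
          apply Finset.sum_congr rfl; intro i _; rw [show 1-((n:ℤ)-((n:ℤ)-i)) = 1-i by ring]
      _ = ∑ i ∈ oddS n, LaurentPolynomial.C (a i) * T (1-((n:ℤ)-i)) := this
      _ = T (2-(n:ℤ)) * O := by
          rw [hO, Finset.mul_sum]
          apply Finset.sum_congr rfl; intro i _
          rw [show 1-((n:ℤ)-i) = (2-(n:ℤ)) + (i-1) by ring, T_add]; ring
  -- generic sum rewriting helpers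
  have sum_odd : ∀ (s t : ℤ → ℤ) (e : ℤ → ℤ), (∀ i ∈ oddS n, s i = t i) →
      ∑ i ∈ oddS n, LaurentPolynomial.C (s i) * T (e i)
        = ∑ i ∈ oddS n, LaurentPolynomial.C (t i) * T (e i) := by
    intro s t e h
    exact Finset.sum_congr rfl fun i hi => by rw [h i hi]
  have sum_even : ∀ (s t : ℤ → ℤ) (e : ℤ → ℤ), (∀ i ∈ evenS n, s i = t i) →
      ∑ i ∈ evenS n, LaurentPolynomial.C (s i) * T (e i)
        = ∑ i ∈ evenS n, LaurentPolynomial.C (t i) * T (e i) := by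
    intro s t e h
    exact Finset.sum_congr rfl fun i hi => by rw [h i hi]
  have sum_even_neg : ∀ (s : ℤ → ℤ) (e : ℤ → ℤ),
      ∑ i ∈ evenS n, LaurentPolynomial.C (-s i) * T (e i)
        = -∑ i ∈ evenS n, LaurentPolynomial.C (s i) * T (e i) := by
    intro s e
    rw [← Finset.sum_neg_distrib]
    exact Finset.sum_congr rfl fun i _ => by rw [map_neg]; ring
  -- the eight decompositions
  have d1 : seqPoly (n+1) a = O + E + c * T (n:ℤ) := by
    rw [seqPoly, decomp, etop]
  have d2 : seqPolyInv (n+1) a = Oi + Ei + c * T (-(n:ℤ)) := by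
    rw [seqPolyInv, decomp, etopi]
  have d3 : seqPoly (n+1) (alphaMap n a) = O - E - c * T (n:ℤ) := by
    rw [seqPoly, decomp, etop, alpha_top,
      sum_odd _ a _ (alpha_odd a), sum_even _ (fun i => -a i) _ (alpha_even a),
      sum_even_neg, map_neg]
    ring
  have d4 : seqPolyInv (n+1) (alphaMap n a) = Oi - Ei - c * T (-(n:ℤ)) := by
    rw [seqPolyInv, decomp, etopi, alpha_top,
      sum_odd _ a _ (alpha_odd a), sum_even _ (fun i => -a i) _ (alpha_even a),
      sum_even_neg, map_neg]
    ring
  have d5 : seqPoly (n+1) (hatSeq n a) = T ((n:ℤ)-2) * Oi + E + c * T (n:ℤ) := by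
    rw [seqPoly, decomp, etop, hat_top,
      sum_odd _ (fun i => a ((n:ℤ) - i)) _ hat_odd, sum_even _ a _ hat_even, hhatO]
  have d6 : seqPolyInv (n+1) (hatSeq n a) = T (2-(n:ℤ)) * O + Ei + c * T (-(n:ℤ)) := by
    rw [seqPolyInv, decomp, etopi, hat_top,
      sum_odd _ (fun i => a ((n:ℤ) - i)) _ hat_odd, sum_even _ a _ hat_even, hhatOi]
  have alphahat_odd : ∀ i ∈ oddS n, alphaMap n (hatSeq n a) i = a ((n:ℤ) - i) := by
    intro i hi; rw [alpha_odd _ i hi, hat_odd i hi]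
  have alphahat_even : ∀ i ∈ evenS n, alphaMap n (hatSeq n a) i = -a i := by
    intro i hi; rw [alpha_even _ i hi, hat_even i hi]
  have d7 : seqPoly (n+1) (alphaMap n (hatSeq n a))
      = T ((n:ℤ)-2) * Oi - E - c * T (n:ℤ) := by
    rw [seqPoly, decomp, etop, alpha_top, hat_top,
      sum_odd _ (fun i => a ((n:ℤ) - i)) _ alphahat_odd,
      sum_even _ (fun i => -a i) _ alphahat_even, sum_even_neg, hhatO, map_neg]
    ring
  have d8 : seqPolyInv (n+1) (alphaMap n (hatSeq n a))
      = T (2-(n:ℤ)) * O - Ei - c * T (-(n:ℤ)) := by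
    rw [seqPolyInv, decomp, etopi, alpha_top, hat_top,
      sum_odd _ (fun i => a ((n:ℤ) - i)) _ alphahat_odd,
      sum_even _ (fun i => -a i) _ alphahat_even, sum_even_neg, hhatOi, map_neg]
    ring
  have hT : (T ((n:ℤ)-2) : LaurentPolynomial ℤ) * T (2-(n:ℤ)) = 1 := by
    rw [← T_add, show (n:ℤ)-2 + (2-(n:ℤ)) = 0 by ring, T_zero]
  simp only [normL, d1, d2, d3, d4, d5, d6, d7, d8]
  linear_combination (2 * O * Oi) * hT
end

section
/- With notation as in the NN-elementary transformation (iv): if (A; B=αA; C; D) ∈ NN(n), then (Â; B̂=αÂ; C; D) ∈ NN(n), where = a_{n-1}, a_2, a_{n-3}, a_4, ..., a_1, a_n, a_{n+1}. -/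
open Finset LaurentPolynomial

/-! ### Auxiliary definitions and lemmas -/

/-- The sign sequence for `alphaMap`. -/
def sg (n : ℕ) (i : ℤ) : ℤ := if i = (n:ℤ) + 1 then -1 else (Int.negOnePow (i - 1) : ℤ)

/-- The index permutation underlying `hatSeq`. -/
def sig (n : ℕ) (i : ℤ) : ℤ := if i ≤ (n:ℤ) ∧ Odd i then (n:ℤ) - i else i

lemma negOnePow_coe (k : ℤ) : (Int.negOnePow k : ℤ) = if Even k then 1 else -1 := by
  by_cases h : Even k
  · simp [Int.negOnePow_even _ h, h]
  · simp [Int.negOnePow_odd _ (Int.not_even_iff_odd.mp h), h]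

lemma alphaMap_eq (n : ℕ) (x : ℤ → ℤ) : alphaMap n x = fun i => sg n i * x i := by
  funext i
  unfold alphaMap sg
  split <;> ring

lemma hatSeq_eq (n : ℕ) (x : ℤ → ℤ) (i : ℤ) : hatSeq n x i = x (sig n i) := by
  unfold hatSeq sig
  rw [apply_ite x]

lemma sg_cases (n : ℕ) (i : ℤ) : sg n i = 1 ∨ sg n i = -1 := by
  unfold sg
  split
  · right; rfl
  · rw [negOnePow_coe]; split
    · left; rfl
    · right; rfl

lemma sg_pos (n : ℕ) {i : ℤ} (hi : i ∈ Finset.Icc (1:ℤ) ((n:ℤ)+1)) (h : sg n i = 1) :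
    i ≤ (n:ℤ) ∧ Odd i := by
  rw [Finset.mem_Icc] at hi
  unfold sg at h
  by_cases hni : i = (n:ℤ) + 1
  · rw [if_pos hni] at h; omega
  · rw [if_neg hni, negOnePow_coe] at h
    by_cases he : Even (i - 1)
    · obtain ⟨m, hm⟩ := he
      exact ⟨by omega, ⟨m, by omega⟩⟩
    · rw [if_neg he] at h; omega

lemma sg_neg (n : ℕ) {i : ℤ} (h : sg n i = -1) : ¬(i ≤ (n:ℤ) ∧ Odd i) := by
  unfold sg at h
  by_cases hni : i = (n:ℤ) + 1
  · rintro ⟨hle, -⟩; omega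
  · rw [if_neg hni, negOnePow_coe] at h
    by_cases he : Even (i - 1)
    · rw [if_pos he] at h; omega
    · rintro ⟨-, m, hm⟩; exact he ⟨m, by omega⟩

lemma sig_of_pos (n : ℕ) {i : ℤ} (hi : i ∈ Finset.Icc (1:ℤ) ((n:ℤ)+1)) (h : sg n i = 1) :
    sig n i = (n:ℤ) - i := by
  unfold sig
  rw [if_pos (sg_pos n hi h)]

lemma sig_of_neg (n : ℕ) {i : ℤ} (h : sg n i = -1) : sig n i = i := by
  unfold sig
  rw [if_neg (sg_neg n h)]

lemma sig_mem (n : ℕ) (hn : Even n) {i : ℤ} (hi : i ∈ Finset.Icc (1:ℤ) ((n:ℤ)+1)) :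
    sig n i ∈ Finset.Icc (1:ℤ) ((n:ℤ)+1) := by
  rw [Finset.mem_Icc] at hi ⊢
  have hnz : Even (n:ℤ) := by exact_mod_cast hn
  obtain ⟨k, hk⟩ := hnz
  unfold sig
  split
  · rename_i hc
    obtain ⟨m, hm⟩ := hc.2
    omega
  · omega

lemma sig_sig (n : ℕ) (hn : Even n) {i : ℤ} (hi : i ∈ Finset.Icc (1:ℤ) ((n:ℤ)+1)) :
    sig n (sig n i) = i := by
  rw [Finset.mem_Icc] at hi
  have hnz : Even (n:ℤ) := by exact_mod_cast hn
  obtain ⟨k, hk⟩ := hnz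
  unfold sig
  by_cases hc : i ≤ (n:ℤ) ∧ Odd i
  · rw [if_pos hc]
    obtain ⟨m, hm⟩ := hc.2
    have h2 : (n:ℤ) - i ≤ (n:ℤ) ∧ Odd ((n:ℤ) - i) := ⟨by omega, ⟨k - m - 1, by omega⟩⟩
    rw [if_pos h2]; ring
  · rw [if_neg hc, if_neg hc]

lemma sg_sig (n : ℕ) (hn : Even n) {i : ℤ} (hi : i ∈ Finset.Icc (1:ℤ) ((n:ℤ)+1)) :
    sg n (sig n i) = sg n i := by
  rw [Finset.mem_Icc] at hi
  have hnz : Even (n:ℤ) := by exact_mod_cast hn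
  obtain ⟨k, hk⟩ := hnz
  unfold sig sg
  by_cases hc : i ≤ (n:ℤ) ∧ Odd i
  · rw [if_pos hc]
    obtain ⟨m, hm⟩ := hc.2
    rw [if_neg (by omega : ¬((n:ℤ) - i = (n:ℤ) + 1)), if_neg (by omega : ¬(i = (n:ℤ) + 1))]
    rw [negOnePow_coe, negOnePow_coe]
    rw [if_pos ⟨k - m - 1, by omega⟩, if_pos ⟨m, by omega⟩]
  · rw [if_neg hc]

lemma normL_expand (m : ℕ) (x : ℤ → ℤ) :
    normL m x = ∑ i ∈ Finset.Icc (1:ℤ) (m:ℤ), ∑ j ∈ Finset.Icc (1:ℤ) (m:ℤ),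
      LaurentPolynomial.C (x i * x j) * LaurentPolynomial.T (i - j) := by
  unfold normL seqPoly seqPolyInv
  rw [Finset.sum_mul_sum]
  refine Finset.sum_congr rfl fun i _ => Finset.sum_congr rfl fun j _ => ?_
  rw [mul_mul_mul_comm, ← map_mul, ← T_add]
  congr 2
  ring

lemma sumAB (n : ℕ) (x : ℤ → ℤ) :
    normL (n+1) x + normL (n+1) (alphaMap n x)
      = ∑ p ∈ (Finset.Icc (1:ℤ) ((n:ℤ)+1)) ×ˢ (Finset.Icc (1:ℤ) ((n:ℤ)+1)),
          LaurentPolynomial.C (x p.1 * x p.2 * (1 + sg n p.1 * sg n p.2))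
            * LaurentPolynomial.T (p.1 - p.2) := by
  rw [normL_expand, normL_expand, alphaMap_eq]
  simp only [Nat.cast_add, Nat.cast_one]
  rw [← Finset.sum_product', ← Finset.sum_product', ← Finset.sum_add_distrib]
  refine Finset.sum_congr rfl fun p _ => ?_
  rw [← add_mul, ← map_add]
  congr 2
  ring

lemma key (n : ℕ) (hn : Even n) (x : ℤ → ℤ) :
    normL (n+1) (hatSeq n x) + normL (n+1) (alphaMap n (hatSeq n x))
      = normL (n+1) x + normL (n+1) (alphaMap n x) := by
  rw [sumAB, sumAB]
  set S := (Finset.Icc (1:ℤ) ((n:ℤ)+1)) ×ˢ (Finset.Icc (1:ℤ) ((n:ℤ)+1)) with hS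
  set c : ℤ × ℤ → ℤ := fun p => x p.1 * x p.2 * (1 + sg n p.1 * sg n p.2) with hc
  -- Step A: reindex the hatted sum by (sig, sig)
  have stepA : (∑ p ∈ S, LaurentPolynomial.C
        (hatSeq n x p.1 * hatSeq n x p.2 * (1 + sg n p.1 * sg n p.2))
        * LaurentPolynomial.T (p.1 - p.2))
      = ∑ p ∈ S, LaurentPolynomial.C (c p) * LaurentPolynomial.T (sig n p.1 - sig n p.2) := by
    refine Finset.sum_nbij' (fun p => (sig n p.1, sig n p.2)) (fun p => (sig n p.1, sig n p.2))
      ?_ ?_ ?_ ?_ ?_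
    · rintro ⟨i, j⟩ hp
      rw [hS, Finset.mem_product] at hp ⊢
      exact ⟨sig_mem n hn hp.1, sig_mem n hn hp.2⟩
    · rintro ⟨i, j⟩ hp
      rw [hS, Finset.mem_product] at hp ⊢
      exact ⟨sig_mem n hn hp.1, sig_mem n hn hp.2⟩
    · rintro ⟨i, j⟩ hp
      rw [hS, Finset.mem_product] at hp
      simp only [sig_sig n hn hp.1, sig_sig n hn hp.2]
    · rintro ⟨i, j⟩ hp
      rw [hS, Finset.mem_product] at hp
      simp only [sig_sig n hn hp.1, sig_sig n hn hp.2]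
    · rintro ⟨i, j⟩ hp
      rw [hS, Finset.mem_product] at hp
      simp only [hc, hatSeq_eq, sig_sig n hn hp.1, sig_sig n hn hp.2,
        sg_sig n hn hp.1, sg_sig n hn hp.2]
  rw [stepA]
  -- Step B: doubling argument
  have swapL : ∀ f : ℤ → ℤ → LaurentPolynomial ℤ,
      (∑ p ∈ S, LaurentPolynomial.C (c p) * f p.1 p.2)
        = ∑ p ∈ S, LaurentPolynomial.C (c (p.2, p.1)) * f p.2 p.1 := by
    intro f
    refine Finset.sum_nbij' (fun p => (p.2, p.1)) (fun p => (p.2, p.1)) ?_ ?_ ?_ ?_ ?_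
    · rintro ⟨i, j⟩ hp
      rw [hS, Finset.mem_product] at hp ⊢
      exact ⟨hp.2, hp.1⟩
    · rintro ⟨i, j⟩ hp
      rw [hS, Finset.mem_product] at hp ⊢
      exact ⟨hp.2, hp.1⟩
    · rintro ⟨i, j⟩ _; rfl
    · rintro ⟨i, j⟩ _; rfl
    · rintro ⟨i, j⟩ _; rfl
  have csymm : ∀ p : ℤ × ℤ, c (p.2, p.1) = c p := by
    rintro ⟨i, j⟩; simp only [hc]; ring
  have cancel_two : ∀ X Y : LaurentPolynomial ℤ, X + X = Y + Y → X = Y := by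
    intro X Y hXY
    ext a
    have hcoef : (X + X).coeff a = (Y + Y).coeff a := by rw [hXY]
    have hcoef2 : X.coeff a + X.coeff a = Y.coeff a + Y.coeff a := by simpa using hcoef
    omega
  have L2 : (∑ p ∈ S, LaurentPolynomial.C (c p) * LaurentPolynomial.T (sig n p.1 - sig n p.2))
      = ∑ p ∈ S, LaurentPolynomial.C (c p) * LaurentPolynomial.T (sig n p.2 - sig n p.1) := by
    rw [swapL (fun u v => LaurentPolynomial.T (sig n u - sig n v))]
    exact Finset.sum_congr rfl fun p _ => by rw [csymm]
  have R2 : (∑ p ∈ S, LaurentPolynomial.C (c p) * LaurentPolynomial.T (p.1 - p.2))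
      = ∑ p ∈ S, LaurentPolynomial.C (c p) * LaurentPolynomial.T (p.2 - p.1) := by
    rw [swapL (fun u v => LaurentPolynomial.T (u - v))]
    exact Finset.sum_congr rfl fun p _ => by rw [csymm]
  have doubled :
      (∑ p ∈ S, LaurentPolynomial.C (c p) * LaurentPolynomial.T (sig n p.1 - sig n p.2))
        + (∑ p ∈ S, LaurentPolynomial.C (c p) * LaurentPolynomial.T (sig n p.1 - sig n p.2))
      = (∑ p ∈ S, LaurentPolynomial.C (c p) * LaurentPolynomial.T (p.1 - p.2))
        + (∑ p ∈ S, LaurentPolynomial.C (c p) * LaurentPolynomial.T (p.1 - p.2)) := by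
    nth_rewrite 2 [L2]
    nth_rewrite 2 [R2]
    rw [← Finset.sum_add_distrib, ← Finset.sum_add_distrib]
    refine Finset.sum_congr rfl fun p hp => ?_
    rw [hS, Finset.mem_product] at hp
    obtain ⟨i, j⟩ := p
    obtain hp1 := hp.1
    obtain hp2 := hp.2
    by_cases hsg : sg n i = sg n j
    · rcases sg_cases n i with h1 | h1
      · have h2 : sg n j = 1 := by rw [← hsg, h1]
        rw [sig_of_pos n hp1 h1, sig_of_pos n hp2 h2]
        rw [show (n:ℤ) - i - ((n:ℤ) - j) = j - i by ring,
          show (n:ℤ) - j - ((n:ℤ) - i) = i - j by ring]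
        ring
      · have h2 : sg n j = -1 := by rw [← hsg, h1]
        rw [sig_of_neg n h1, sig_of_neg n h2]
    · have hz : c (i, j) = 0 := by
        simp only [hc]
        rcases sg_cases n i with h1 | h1 <;> rcases sg_cases n j with h2 | h2 <;>
          rw [h1, h2] at hsg ⊢ <;>
          first
          | exact absurd rfl hsg
          | ring
      simp [hz]
  exact cancel_two _ _ doubled

/-- the NN-elementary transformation (iv) preserves `NN(n)`. -/
theorem stmt_10 (n : ℕ) (hn : Even n) (a c d : ℤ → ℤ)
    (h : isNN n a (alphaMap n a) c d) :
    isNN n (hatSeq n a) (alphaMap n (hatSeq n a)) c d := by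
  obtain ⟨ha, hb, hC, hD, _, _, hnorm⟩ := h
  have hcast : ((n+1:ℕ):ℤ) = (n:ℤ) + 1 := by push_cast; ring
  have hhat : binaryOn (n+1) (hatSeq n a) := by
    intro k hk
    rw [hatSeq_eq]
    exact ha _ (by rw [hcast] at hk ⊢; exact sig_mem n hn hk)
  refine ⟨hhat, ?_, hC, hD, ?_, ?_, ?_⟩
  · intro k hk
    rw [alphaMap_eq]
    rcases sg_cases n k with h1 | h1 <;> rcases hhat k hk with h2 | h2 <;>
      simp [h1, h2]
  · intro i hi1 hi2
    unfold alphaMap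
    rw [if_neg (by omega)]
  · unfold alphaMap
    rw [if_pos rfl]
  · rw [key n hn a, hnorm]
end

section
/- Let A be a ±1-sequence of length n+1 (n even) and B = αA. For any even i and odd j with j < n, the entries of = a_{n-1}, a_2, a_{n-3}, a_4, ..., a_1, a_n, a_{n+1} and B̂ = α satisfy â_i â_j + b̂_i b̂_j = a_i a_j + b_i b_j. -/
open Finset LaurentPolynomial

/-- the entrywise identity `â_i â_j + b̂_i b̂_j = a_i a_j + b_i b_j`
for even `i` and odd `j < n`. -/
theorem stmt_11 (n : ℕ) (hn : Even n) (a : ℤ → ℤ) (ha : binaryOn (n+1) a) :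
    ∀ i j : ℤ, Even i → Odd j → j < (n:ℤ) →
      hatSeq n a i * hatSeq n a j
        + alphaMap n (hatSeq n a) i * alphaMap n (hatSeq n a) j
      = a i * a j + alphaMap n a i * alphaMap n a j := by
  intro i j hi hj hjn
  obtain ⟨ki, hki⟩ := hi
  obtain ⟨kj, hkj⟩ := hj
  have hio : ¬ Odd i := by rw [Int.not_odd_iff_even]; exact ⟨ki, hki⟩
  have hine : i ≠ (n:ℤ) + 1 := by
    intro h
    exact hio (h ▸ ⟨(n:ℤ)/2, by obtain ⟨m, hm⟩ := hn; omega⟩)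
  have hjne : j ≠ (n:ℤ) + 1 := by omega
  have h1 : (Int.negOnePow (i - 1) : ℤ) = -1 := by
    have : Odd (i - 1) := ⟨ki - 1, by omega⟩
    simp [Int.negOnePow_odd _ this]
  have h2 : (Int.negOnePow (j - 1) : ℤ) = 1 := by
    have : Even (j - 1) := ⟨kj, by omega⟩
    simp [Int.negOnePow_even _ this]
  have hjc : j ≤ (n:ℤ) ∧ Odd j := ⟨hjn.le, ⟨kj, hkj⟩⟩
  simp only [hatSeq, alphaMap, if_neg hine, if_neg hjne, hio, and_false, if_false,
    if_pos hjc, h1, h2]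
  ring
end
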